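/- Let p₁, p₂ be positive integers, and let Σ = [[A₁₁, A₁₂], [A₁₂ᵀ, A₂₂]] be a symmetric positive definite (p₁+p₂)×(p₁+p₂) real matrix with blocks A₁₁ (p₁×p₁), A₁₂ (p₁×p₂), A₂₂ (p₂×p₂). Then for every u₁ ∈ ℝ^{p₁} and u₂ ∈ ℝ^{p₂}, writing u = (u₁, u₂), one has uᵀ Σ⁻¹ u ≥ u₁ᵀ A₁₁⁻¹ u₁. (In particular, A₁₁ is itself positive definite, hence invertible.) -/

import Mathlib

/-!
For an invertible positive semidefinite `S`, `uᵀ S⁻¹ u` is the maximum over `w` of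
`2 wᵀu - wᵀ S w`, attained at `w = S⁻¹ u` (the gap is `(S⁻¹u - w)ᵀ S (S⁻¹u - w) ≥ 0`).
Testing this with `w = (A₁₁⁻¹ u₁, 0)`, which only sees the block `A₁₁`, gives the lower bound
`2 u₁ᵀA₁₁⁻¹u₁ - u₁ᵀA₁₁⁻¹u₁`.
-/

open Matrix

namespace Matrix

variable {m n : Type*} [Fintype m] [Fintype n] [DecidableEq m] [DecidableEq n]

theorem PosSemidef.two_mul_dotProduct_sub_le_dotProduct_inv_mulVec {S : Matrix n n ℝ}
    (hS : S.PosSemidef) (hSu : IsUnit S) (u w : n → ℝ) :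
    2 * (w ⬝ᵥ u) - w ⬝ᵥ (S *ᵥ w) ≤ u ⬝ᵥ (S⁻¹ *ᵥ u) := by
  set v := S⁻¹ *ᵥ u
  have hSv : S *ᵥ v = u := by
    rw [mulVec_mulVec, mul_nonsing_inv _ ((isUnit_iff_isUnit_det S).mp hSu), one_mulVec]
  have hvSw : v ⬝ᵥ (S *ᵥ w) = w ⬝ᵥ u := by
    rw [dotProduct_mulVec, ← mulVec_transpose, show Sᵀ = S from hS.isHermitian, hSv,
      dotProduct_comm]
  have := hS.dotProduct_mulVec_nonneg (v - w)
  simp only [star_trivial, mulVec_sub, dotProduct_sub, sub_dotProduct, hSv, hvSw] at this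
  rw [dotProduct_comm v u] at this
  linarith

theorem PosDef.dotProduct_inv_mulVec_le_fromBlocks {A : Matrix m m ℝ} {B : Matrix m n ℝ}
    {C : Matrix n m ℝ} {D : Matrix n n ℝ} (hS : (fromBlocks A B C D).PosDef)
    (u₁ : m → ℝ) (u₂ : n → ℝ) :
    u₁ ⬝ᵥ (A⁻¹ *ᵥ u₁) ≤ Sum.elim u₁ u₂ ⬝ᵥ ((fromBlocks A B C D)⁻¹ *ᵥ Sum.elim u₁ u₂) := by
  have hA : A.PosDef := hS.submatrix Sum.inl_injective
  set y := A⁻¹ *ᵥ u₁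
  have hAy : A *ᵥ y = u₁ := by
    rw [mulVec_mulVec, mul_nonsing_inv _ hA.det_pos.ne'.isUnit, one_mulVec]
  have hwu : Sum.elim y 0 ⬝ᵥ Sum.elim u₁ u₂ = u₁ ⬝ᵥ y := by
    simp [dotProduct_block, dotProduct_comm]
  have hwSw : Sum.elim y 0 ⬝ᵥ (fromBlocks A B C D *ᵥ Sum.elim y 0) = u₁ ⬝ᵥ y := by
    simp [fromBlocks_mulVec, dotProduct_block, hAy, dotProduct_comm]
  have := hS.posSemidef.two_mul_dotProduct_sub_le_dotProduct_inv_mulVec hS.isUnit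
    (Sum.elim u₁ u₂) (Sum.elim y 0)
  linarith

end Matrix

theorem stmt_8_general (p₁ p₂ : ℕ)
    (A₁₁ : Matrix (Fin p₁) (Fin p₁) ℝ) (A₁₂ : Matrix (Fin p₁) (Fin p₂) ℝ)
    (A₂₂ : Matrix (Fin p₂) (Fin p₂) ℝ)
    (hSig : (Matrix.fromBlocks A₁₁ A₁₂ A₁₂ᵀ A₂₂).PosDef) :
    A₁₁.PosDef ∧
      ∀ (u₁ : Fin p₁ → ℝ) (u₂ : Fin p₂ → ℝ),
        dotProduct u₁ (A₁₁⁻¹.mulVec u₁) ≤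
          dotProduct (Sum.elim u₁ u₂)
            ((Matrix.fromBlocks A₁₁ A₁₂ A₁₂ᵀ A₂₂)⁻¹.mulVec (Sum.elim u₁ u₂)) :=
  ⟨hSig.submatrix Sum.inl_injective, hSig.dotProduct_inv_mulVec_le_fromBlocks⟩

/-- If `Σ = [[A₁₁, A₁₂], [A₁₂ᵀ, A₂₂]]` is symmetric positive definite, then for every
`u = (u₁, u₂)` the distance of separation `uᵀ Σ⁻¹ u` is at least `u₁ᵀ A₁₁⁻¹ u₁`
(in particular, the block `A₁₁` is itself positive definite). -/
theorem stmt_8 (p₁ p₂ : ℕ) (hp₁ : 0 < p₁) (hp₂ : 0 < p₂)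
    (A₁₁ : Matrix (Fin p₁) (Fin p₁) ℝ) (A₁₂ : Matrix (Fin p₁) (Fin p₂) ℝ)
    (A₂₂ : Matrix (Fin p₂) (Fin p₂) ℝ)
    (hSig : (Matrix.fromBlocks A₁₁ A₁₂ A₁₂ᵀ A₂₂).PosDef) :
    A₁₁.PosDef ∧
      ∀ (u₁ : Fin p₁ → ℝ) (u₂ : Fin p₂ → ℝ),
        dotProduct u₁ (A₁₁⁻¹.mulVec u₁) ≤
          dotProduct (Sum.elim u₁ u₂)
            ((Matrix.fromBlocks A₁₁ A₁₂ A₁₂ᵀ A₂₂)⁻¹.mulVec (Sum.elim u₁ u₂)) :=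
  stmt_8_general p₁ p₂ A₁₁ A₁₂ A₂₂ hSig
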